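/- Let d = 4, let u, v ∈ S³ be linearly independent, let L ∈ G(4,2) with L = u^⊥ ∩ v^⊥, and let u₁, u₂, u₃ be an orthonormal basis of u^⊥ and v₁, v₂, v₃ an orthonormal basis of v^⊥. Then Σ_{i=1}^3 Σ_{j=1}^3 ‖u_i ∧ v_j ∧ u ∧ v‖² = 2 sin²∠(u,v). -/

import Mathlib

open scoped RealInnerProductSpace
open InnerProductGeometry

/-- The Gram-determinant squared norm `‖c₁ ∧ c₂ ∧ c₃ ∧ c₄‖² = det((⟨c_i, c_j⟩))`. -/
noncomputable def wedgeNormSq4 (c : Fin 4 → EuclideanSpace ℝ (Fin 4)) : ℝ :=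
  Matrix.det (Matrix.of fun i j => ⟪c i, c j⟫)

theorem my_det_fin_four {R : Type*} [CommRing R] (A : Matrix (Fin 4) (Fin 4) R) : A.det =
    A 0 0*A 1 1*A 2 2*A 3 3 - A 0 0*A 1 1*A 2 3*A 3 2 - A 0 0*A 1 2*A 2 1*A 3 3
  + A 0 0*A 1 2*A 2 3*A 3 1 + A 0 0*A 1 3*A 2 1*A 3 2 - A 0 0*A 1 3*A 2 2*A 3 1
  - A 0 1*A 1 0*A 2 2*A 3 3 + A 0 1*A 1 0*A 2 3*A 3 2 + A 0 1*A 1 2*A 2 0*A 3 3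
  - A 0 1*A 1 2*A 2 3*A 3 0 - A 0 1*A 1 3*A 2 0*A 3 2 + A 0 1*A 1 3*A 2 2*A 3 0
  + A 0 2*A 1 0*A 2 1*A 3 3 - A 0 2*A 1 0*A 2 3*A 3 1 - A 0 2*A 1 1*A 2 0*A 3 3
  + A 0 2*A 1 1*A 2 3*A 3 0 + A 0 2*A 1 3*A 2 0*A 3 1 - A 0 2*A 1 3*A 2 1*A 3 0
  - A 0 3*A 1 0*A 2 1*A 3 2 + A 0 3*A 1 0*A 2 2*A 3 1 + A 0 3*A 1 1*A 2 0*A 3 2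
  - A 0 3*A 1 1*A 2 2*A 3 0 - A 0 3*A 1 2*A 2 0*A 3 1 + A 0 3*A 1 2*A 2 1*A 3 0 := by
  rw [Matrix.det_succ_row_zero, Fin.sum_univ_four]
  simp [Matrix.det_fin_three, Fin.succAbove, Fin.lt_def, Matrix.submatrix_apply,
    show (Fin.succ 2 : Fin 4) = 3 from rfl, show ((3:Fin 4):ℕ) = 3 from rfl,
    show Fin.castSucc (2 : Fin 3) = (2:Fin 4) from rfl]
  ring

/-- Parseval identity for the orthonormal basis `{u, u'₀, u'₁, u'₂}` of `ℝ⁴`. -/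
lemma parseval4 (u : EuclideanSpace ℝ (Fin 4)) (hu : ‖u‖ = 1)
    (u' : Fin 3 → EuclideanSpace ℝ (Fin 4)) (hu' : Orthonormal ℝ u')
    (hu'u : ∀ i, ⟪u' i, u⟫ = 0) (x y : EuclideanSpace ℝ (Fin 4)) :
    ⟪x, u⟫ * ⟪u, y⟫ + ∑ i : Fin 3, ⟪x, u' i⟫ * ⟪u' i, y⟫ = ⟪x, y⟫ := by
  set w : Fin 4 → EuclideanSpace ℝ (Fin 4) := Fin.cons u u' with hw
  have hwo : Orthonormal ℝ w := by
    rw [orthonormal_iff_ite]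
    intro i j
    refine Fin.cases ?_ (fun i => ?_) i <;> refine Fin.cases ?_ (fun j => ?_) j
    · rw [if_pos rfl]
      simp only [hw, Fin.cons_zero]
      rw [real_inner_self_eq_norm_mul_norm, hu]; norm_num
    · rw [if_neg (Fin.succ_ne_zero j).symm]
      simp only [hw, Fin.cons_zero, Fin.cons_succ]
      rw [real_inner_comm]; exact hu'u j
    · rw [if_neg (Fin.succ_ne_zero i)]
      simp only [hw, Fin.cons_zero, Fin.cons_succ]
      exact hu'u i
    · simp only [hw, Fin.cons_succ, Fin.succ_inj]
      exact orthonormal_iff_ite.1 hu' i j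
  have hcard : Fintype.card (Fin 4) = Module.finrank ℝ (EuclideanSpace ℝ (Fin 4)) := by
    simp
  let B : OrthonormalBasis (Fin 4) ℝ (EuclideanSpace ℝ (Fin 4)) :=
    (basisOfOrthonormalOfCardEqFinrank hwo hcard).toOrthonormalBasis
      (by rwa [coe_basisOfOrthonormalOfCardEqFinrank])
  have hB : ⇑B = w := by
    simp only [B, Module.Basis.coe_toOrthonormalBasis, coe_basisOfOrthonormalOfCardEqFinrank]
  have h := B.sum_inner_mul_inner x y
  rw [hB, Fin.sum_univ_succ] at h
  simp only [hw, Fin.cons_zero, Fin.cons_succ] at h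
  exact h

/-- In `ℝ⁴`: let `u, v` be linearly independent unit vectors, `u₁,u₂,u₃` an orthonormal
basis of `u^⊥` and `v₁,v₂,v₃` an orthonormal basis of `v^⊥`.  Then
`Σ_{i=1}^3 Σ_{j=1}^3 ‖u_i ∧ v_j ∧ u ∧ v‖² = 2 sin²∠(u,v)`. -/
theorem sum_wedge_normSq_eq_two_sinSq (u v : EuclideanSpace ℝ (Fin 4))
    (hu : ‖u‖ = 1) (hv : ‖v‖ = 1) (huv : LinearIndependent ℝ ![u, v])
    (u' : Fin 3 → EuclideanSpace ℝ (Fin 4)) (hu' : Orthonormal ℝ u')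
    (hu'u : ∀ i, ⟪u' i, u⟫ = 0)
    (v' : Fin 3 → EuclideanSpace ℝ (Fin 4)) (hv' : Orthonormal ℝ v')
    (hv'v : ∀ j, ⟪v' j, v⟫ = 0) :
    (∑ i : Fin 3, ∑ j : Fin 3, wedgeNormSq4 ![u' i, v' j, u, v])
      = 2 * Real.sin (angle u v) ^ 2 := by
  have huu : ⟪u, u⟫ = (1 : ℝ) := by
    rw [real_inner_self_eq_norm_mul_norm, hu]; norm_num
  have hvv : ⟪v, v⟫ = (1 : ℝ) := by
    rw [real_inner_self_eq_norm_mul_norm, hv]; norm_num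
  have hvu : ⟪v, u⟫ = ⟪u, v⟫ := real_inner_comm u v
  have huu' : ∀ i, ⟪u, u' i⟫ = (0:ℝ) := fun i => by
    rw [real_inner_comm]; exact hu'u i
  have hvv' : ∀ j, ⟪v, v' j⟫ = (0:ℝ) := fun j => by
    rw [real_inner_comm]; exact hv'v j
  have hvu' : ∀ i, ⟪v, u' i⟫ = ⟪u' i, v⟫ := fun i => real_inner_comm (u' i) v
  have huv' : ∀ j, ⟪u, v' j⟫ = ⟪v' j, u⟫ := fun j => real_inner_comm (v' j) u
  have hv'u' : ∀ j i, ⟪v' j, u' i⟫ = ⟪u' i, v' j⟫ := fun j i => real_inner_comm _ _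
  -- determinant expansion
  have hdet : ∀ i j, wedgeNormSq4 ![u' i, v' j, u, v] =
      1 - ⟪u, v⟫ ^ 2 - ⟪u' i, v⟫ ^ 2 - ⟪v' j, u⟫ ^ 2 + ⟪u' i, v⟫ ^ 2 * ⟪v' j, u⟫ ^ 2
        - 2 * ⟪u' i, v' j⟫ * ⟪u' i, v⟫ * ⟪v' j, u⟫ * ⟪u, v⟫
        - ⟪u' i, v' j⟫ ^ 2 + ⟪u' i, v' j⟫ ^ 2 * ⟪u, v⟫ ^ 2 := by
    intro i j
    have huiui : ⟪u' i, u' i⟫ = (1 : ℝ) := by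
      rw [real_inner_self_eq_norm_mul_norm, hu'.1 i]; norm_num
    have hvjvj : ⟪v' j, v' j⟫ = (1 : ℝ) := by
      rw [real_inner_self_eq_norm_mul_norm, hv'.1 j]; norm_num
    rw [wedgeNormSq4, my_det_fin_four]
    simp only [Matrix.of_apply, Matrix.cons_val_zero, Matrix.cons_val_one, Matrix.head_cons,
      Matrix.cons_val_two, Matrix.cons_val_three, Matrix.tail_cons]
    rw [huiui, hvjvj, huu, hvv, hu'u i, hv'v j, huu' i, hvv' j, hvu, hvu' i, huv' j,
      hv'u' j i]
    ring
  -- Parseval consequences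
  have hPu := parseval4 u hu u' hu' hu'u
  have hPv := parseval4 v hv v' hv' hv'v
  have hsb : ∑ i : Fin 3, ⟪u' i, v⟫ * ⟪u' i, v⟫ = 1 - ⟪u, v⟫ ^ 2 := by
    have h := hPu v v
    simp only [hvu' ] at h
    rw [hvv, hvu] at h
    linear_combination h
  have hsc : ∑ j : Fin 3, ⟪v' j, u⟫ * ⟪v' j, u⟫ = 1 - ⟪u, v⟫ ^ 2 := by
    have h := hPv u u
    simp only [huv'] at h
    rw [huu, hvu] at h
    linear_combination h
  have hsac : ∀ i, ∑ j : Fin 3, ⟪u' i, v' j⟫ * ⟪v' j, u⟫ = -(⟪u' i, v⟫ * ⟪u, v⟫) := by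
    intro i
    have h := hPv (u' i) u
    rw [hu'u i, hvu] at h
    linear_combination h
  have hsa2 : ∀ i, ∑ j : Fin 3, ⟪u' i, v' j⟫ * ⟪u' i, v' j⟫ = 1 - ⟪u' i, v⟫ * ⟪u' i, v⟫ := by
    intro i
    have h := hPv (u' i) (u' i)
    simp only [hv'u', hvu' i] at h
    have huiui : ⟪u' i, u' i⟫ = (1 : ℝ) := by
      rw [real_inner_self_eq_norm_mul_norm, hu'.1 i]; norm_num
    rw [huiui] at h
    linear_combination h
  -- inner sums
  have hinner : ∀ i, (∑ j, wedgeNormSq4 ![u' i, v' j, u, v])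
      = (1 - ⟪u, v⟫ ^ 2) - ⟪u' i, v⟫ * ⟪u' i, v⟫ := by
    intro i
    have e1 : (∑ j, wedgeNormSq4 ![u' i, v' j, u, v])
        = (∑ _j : Fin 3, (1 - ⟪u, v⟫ ^ 2 - ⟪u' i, v⟫ ^ 2))
          + (⟪u' i, v⟫ ^ 2 - 1) * (∑ j : Fin 3, ⟪v' j, u⟫ * ⟪v' j, u⟫)
          + (-2 * ⟪u' i, v⟫ * ⟪u, v⟫) * (∑ j : Fin 3, ⟪u' i, v' j⟫ * ⟪v' j, u⟫)
          + (⟪u, v⟫ ^ 2 - 1) * (∑ j : Fin 3, ⟪u' i, v' j⟫ * ⟪u' i, v' j⟫) := by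
      rw [Finset.mul_sum, Finset.mul_sum, Finset.mul_sum, ← Finset.sum_add_distrib,
        ← Finset.sum_add_distrib, ← Finset.sum_add_distrib]
      refine Finset.sum_congr rfl fun j _ => ?_
      rw [hdet i j]; ring
    rw [e1, hsc, hsac i, hsa2 i, Finset.sum_const]
    simp only [Finset.card_univ, Fintype.card_fin, nsmul_eq_mul, Nat.cast_ofNat]
    ring
  have e2 : (∑ i : Fin 3, ∑ j : Fin 3, wedgeNormSq4 ![u' i, v' j, u, v])
      = (∑ _i : Fin 3, (1 - ⟪u, v⟫ ^ 2))
        + (-1) * (∑ i : Fin 3, ⟪u' i, v⟫ * ⟪u' i, v⟫) := by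
    rw [Finset.mul_sum, ← Finset.sum_add_distrib]
    refine Finset.sum_congr rfl fun i _ => ?_
    rw [hinner i]; ring
  rw [e2, hsb, Finset.sum_const]
  have hsin : Real.sin (angle u v) ^ 2 = 1 - ⟪u, v⟫ ^ 2 := by
    rw [Real.sin_sq, cos_angle, hu, hv]
    norm_num
  rw [hsin]
  simp only [Finset.card_univ, Fintype.card_fin, nsmul_eq_mul, Nat.cast_ofNat]
  ring
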